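/- Let G = (V, E, src, tgt, v0, S, 𝕐, λ) be a world graph and I¹, I² itinerary DFAs over G. A sensor selection M ⊆ S satisfies the discrimination constraint [I¹, I²]^≁ (i.e., there exist no w1 ∈ Walks(G) ∩ L(I¹) and w2 ∈ Walks(G) ∩ L(I²) with β_G(w1, M) = β_G(w2, M)) if and only if the languages of the corresponding signature automata are disjoint: L(S_{G,I¹,M}) ∩ L(S_{G,I²,M}) = ∅. -/

import Mathlib

/-!
A path of the signature automaton is a run of the product automaton whose edges have been
relabelled by their sensor labels, the edges seen by no selected sensor becoming ε-moves; and a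
run of the product automaton to an accepting state is exactly a walk of `G` accepted by the
itinerary DFA. So the language of `S_{G,I,M}` is the set of signatures of walks accepted by `I`,
and two such languages meet iff two accepted walks have the same signature.
-/

attribute [local instance] Classical.propDecidable

/-- A world graph: an edge-labelled directed multigraph with an initial vertex,
a nonempty finite set of sensors, pairwise disjoint event sets for the sensors,
and a labelling of edges by sets of events drawn from the sensors' event sets. -/
structure WorldGraph (V E S Ev : Type) where
  src : E → V
  tgt : E → V
  v0 : V
  sensors : Finset S
  sensors_nonempty : sensors.Nonempty
  events : S → Set Ev
  events_disjoint : ∀ s ∈ sensors, ∀ t ∈ sensors, s ≠ t → Disjoint (events s) (events t)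
  lab : E → Set Ev
  lab_sub : ∀ e, lab e ⊆ ⋃ s ∈ sensors, events s

namespace WorldGraph

variable {V E S Ev Q : Type}

/-- A walk: a string of edges starting at the initial vertex with matching endpoints. -/
def IsWalk (G : WorldGraph V E S Ev) (w : List E) : Prop :=
  (∀ e ∈ w.head?, G.src e = G.v0) ∧ w.Chain' fun a b => G.tgt a = G.src b

/-- The set of all events producible by sensors in the selection `M`. -/
def YM (G : WorldGraph V E S Ev) (M : Finset S) : Set Ev := ⋃ s ∈ M, G.events s

/-- The sensor labelling function: `some (λ(e) ∩ Y_M)` if that set is nonempty, else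
`none` (representing the empty symbol ε). -/
noncomputable def labM (G : WorldGraph V E S Ev) (M : Finset S) (e : E) : Option (Set Ev) :=
  if (G.lab e ∩ G.YM M).Nonempty then some (G.lab e ∩ G.YM M) else none

/-- The signature of a walk: the string of nonempty sensor labels, ε symbols dropped. -/
noncomputable def signature (G : WorldGraph V E S Ev) (M : Finset S) (w : List E) :
    List (Set Ev) :=
  w.filterMap (G.labM M)

/-- One step of the (partial) product automaton of world graph `G` and itinerary DFA `I`. -/
noncomputable def prodStep (G : WorldGraph V E S Ev) (I : DFA E Q) (p : Q × V) (e : E) :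
    Option (Q × V) :=
  if G.src e = p.2 then some (I.step p.1 e, G.tgt e) else none

/-- Tracing a string of edges through the product automaton from the initial state;
`none` means some transition was undefined (⊥). -/
noncomputable def prodEval (G : WorldGraph V E S Ev) (I : DFA E Q) (w : List E) :
    Option (Q × V) :=
  w.foldl (fun o e => o.bind fun p => G.prodStep I p e) (some (I.start, G.v0))

/-- The language of the product automaton: strings traceable from `(q0, v0)` without
producing ⊥ which arrive at an accepting state. -/
def ProdAccepts (G : WorldGraph V E S Ev) (I : DFA E Q) (w : List E) : Prop :=
  ∃ p, G.prodEval I w = some p ∧ p.1 ∈ I.accept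

/-- The signature automaton: an ε-NFA over the alphabet of sensor labels, with the
states, initial state, and accepting states of the product automaton. -/
noncomputable def sigNFA (G : WorldGraph V E S Ev) (I : DFA E Q) (M : Finset S) :
    εNFA (Set Ev) (Q × V) where
  step := fun p σ => { p' | ∃ e, G.prodStep I p e = some p' ∧ G.labM M e = σ }
  start := {(I.start, G.v0)}
  accept := { p | p.1 ∈ I.accept }

/-- `M` satisfies the discrimination constraint `[I¹, I²]^≁`. -/
def SatisfiesDiscrimination {Q₁ Q₂ : Type} (G : WorldGraph V E S Ev)
    (I₁ : DFA E Q₁) (I₂ : DFA E Q₂) (M : Finset S) : Prop :=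
  ¬ ∃ w₁ w₂ : List E, (G.IsWalk w₁ ∧ w₁ ∈ I₁.accepts) ∧ (G.IsWalk w₂ ∧ w₂ ∈ I₂.accepts) ∧
      G.signature M w₁ = G.signature M w₂

/-- `M` satisfies the conflation constraint `(I¹, I²)^~`. -/
def SatisfiesConflation {Q₁ Q₂ : Type} (G : WorldGraph V E S Ev)
    (I₁ : DFA E Q₁) (I₂ : DFA E Q₂) (M : Finset S) : Prop :=
  ∀ w : List E, G.IsWalk w → w ∈ I₁.accepts →
    ∃ c : List E, G.IsWalk c ∧ c ∈ I₂.accepts ∧ G.signature M w = G.signature M c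

end WorldGraph

theorem List.foldl_bind_eq_bind_foldlM {α β : Type} (f : α → β → Option α) (o : Option α)
    (w : List β) : w.foldl (fun o b => o.bind (f · b)) o = o.bind (w.foldlM f) := by
  induction w generalizing o with
  | nil => cases o <;> rfl
  | cons b w ih => cases o <;> simp [ih]

namespace WorldGraph

variable {V E S Ev Q : Type} (G : WorldGraph V E S Ev)

def IsWalkFrom (v : V) (w : List E) : Prop :=
  (∀ e ∈ w.head?, G.src e = v) ∧ w.IsChain fun a b => G.tgt a = G.src b

theorem isWalk_iff_isWalkFrom {w : List E} : G.IsWalk w ↔ G.IsWalkFrom G.v0 w :=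
  Iff.rfl

theorem isWalkFrom_nil (v : V) : G.IsWalkFrom v [] :=
  ⟨by simp, List.isChain_nil⟩

theorem isWalkFrom_cons {v : V} {e : E} {w : List E} :
    G.IsWalkFrom v (e :: w) ↔ G.src e = v ∧ G.IsWalkFrom (G.tgt e) w := by
  simp [IsWalkFrom, List.isChain_cons, eq_comm]

theorem signature_eq_reduceOption_map (M : Finset S) (w : List E) :
    G.signature M w = (w.map (G.labM M)).reduceOption := by
  rw [signature, List.reduceOption, List.filterMap_map, Function.id_comp]

variable (I : DFA E Q)

noncomputable def prodEvalFrom (p : Q × V) (w : List E) : Option (Q × V) :=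
  w.foldlM (G.prodStep I) p

theorem prodEval_eq_prodEvalFrom (w : List E) :
    G.prodEval I w = G.prodEvalFrom I (I.start, G.v0) w :=
  List.foldl_bind_eq_bind_foldlM _ _ w

theorem prodEvalFrom_cons (p : Q × V) (e : E) (w : List E) :
    G.prodEvalFrom I p (e :: w) = (G.prodStep I p e).bind (G.prodEvalFrom I · w) :=
  List.foldlM_cons ..

theorem prodStep_eq_some_iff {p p' : Q × V} {e : E} :
    G.prodStep I p e = some p' ↔ G.src e = p.2 ∧ p' = (I.step p.1 e, G.tgt e) := by
  unfold prodStep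
  split_ifs <;> simp_all [eq_comm]

theorem isSome_prodEvalFrom_iff {p : Q × V} {w : List E} :
    (G.prodEvalFrom I p w).isSome ↔ G.IsWalkFrom p.2 w := by
  induction w generalizing p with
  | nil => simp [prodEvalFrom, isWalkFrom_nil]
  | cons e w ih =>
    rw [prodEvalFrom_cons, isWalkFrom_cons]
    by_cases he : G.src e = p.2
    · simp [prodStep, he, ih]
    · simp [prodStep, he]

theorem fst_of_prodEvalFrom_eq_some {p p' : Q × V} {w : List E}
    (h : G.prodEvalFrom I p w = some p') : p'.1 = I.evalFrom p.1 w := by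
  induction w generalizing p with
  | nil => simp_all [prodEvalFrom]
  | cons e w ih =>
    rw [prodEvalFrom_cons, Option.bind_eq_some_iff] at h
    obtain ⟨q, hq, hw⟩ := h
    obtain ⟨-, rfl⟩ := (G.prodStep_eq_some_iff I).1 hq
    exact ih hw

theorem prodAccepts_iff {w : List E} :
    G.ProdAccepts I w ↔ G.IsWalk w ∧ w ∈ I.accepts := by
  rw [ProdAccepts, isWalk_iff_isWalkFrom, prodEval_eq_prodEvalFrom]
  constructor
  · rintro ⟨p, hp, hacc⟩
    refine ⟨(G.isSome_prodEvalFrom_iff I).1 (Option.isSome_iff_exists.2 ⟨p, hp⟩), ?_⟩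
    rwa [G.fst_of_prodEvalFrom_eq_some I hp] at hacc
  · rintro ⟨hwalk, hacc⟩
    obtain ⟨p, hp⟩ := Option.isSome_iff_exists.1
      ((G.isSome_prodEvalFrom_iff I (p := (I.start, G.v0))).2 hwalk)
    exact ⟨p, hp, (G.fst_of_prodEvalFrom_eq_some I hp).symm ▸ hacc⟩

/-- A path of the signature automaton reading `x` (with `none` for ε) is a run of the product
automaton along edges whose sensor labels spell `x`. -/
theorem sigNFA_isPath_iff (M : Finset S) {p p' : Q × V} {x : List (Option (Set Ev))} :
    (G.sigNFA I M).IsPath p p' x ↔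
      ∃ w, G.prodEvalFrom I p w = some p' ∧ w.map (G.labM M) = x := by
  induction x generalizing p with
  | nil =>
    rw [εNFA.isPath_nil]
    constructor
    · rintro rfl
      exact ⟨[], rfl, rfl⟩
    · rintro ⟨w, hw, hx⟩
      obtain rfl := List.map_eq_nil_iff.1 hx
      exact Option.some_inj.1 hw
  | cons a x ih =>
    rw [← List.singleton_append, εNFA.isPath_append]
    simp only [εNFA.isPath_singleton, ih]
    constructor
    · rintro ⟨t, ⟨e, he, rfl⟩, w, hw, rfl⟩
      exact ⟨e :: w, by rwa [prodEvalFrom_cons, he, Option.bind_some], rfl⟩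
    · rintro ⟨_ | ⟨e, w⟩, hw, hx⟩
      · cases hx
      · obtain ⟨rfl, rfl⟩ := List.cons_eq_cons.1 hx
        rw [prodEvalFrom_cons, Option.bind_eq_some_iff] at hw
        obtain ⟨t, ht, hw⟩ := hw
        exact ⟨t, ⟨e, ht, rfl⟩, w, hw, rfl⟩

theorem mem_sigNFA_accepts_iff (M : Finset S) {x : List (Set Ev)} :
    x ∈ (G.sigNFA I M).accepts ↔
      ∃ w, (G.IsWalk w ∧ w ∈ I.accepts) ∧ G.signature M w = x := by
  simp only [εNFA.mem_accepts_iff_exists_path, sigNFA_isPath_iff, ← prodAccepts_iff,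
    ProdAccepts, prodEval_eq_prodEvalFrom, signature_eq_reduceOption_map]
  constructor
  · rintro ⟨_, p, _, rfl, hp, rfl, w, hw, rfl⟩
    exact ⟨w, ⟨p, hw, hp⟩, rfl⟩
  · rintro ⟨w, ⟨p, hw, hp⟩, rfl⟩
    exact ⟨_, p, _, rfl, hp, rfl, w, hw, rfl⟩

end WorldGraph

theorem satisfiesDiscrimination_iff_sig_languages_disjoint_general
    (V E S Ev Q₁ Q₂ : Type) (G : WorldGraph V E S Ev)
    (I₁ : DFA E Q₁) (I₂ : DFA E Q₂) (M : Finset S) :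
    G.SatisfiesDiscrimination I₁ I₂ M ↔
      (G.sigNFA I₁ M).accepts ⊓ (G.sigNFA I₂ M).accepts = ⊥ := by
  constructor
  · intro h
    refine eq_bot_iff.2 fun x ⟨hx₁, hx₂⟩ => ?_
    obtain ⟨w₁, hw₁, rfl⟩ := (G.mem_sigNFA_accepts_iff I₁ M).1 hx₁
    obtain ⟨w₂, hw₂, hsig⟩ := (G.mem_sigNFA_accepts_iff I₂ M).1 hx₂
    exact h ⟨w₁, w₂, hw₁, hw₂, hsig.symm⟩
  · rintro h ⟨w₁, w₂, hw₁, hw₂, hsig⟩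
    have hx : G.signature M w₁ ∈ (G.sigNFA I₁ M).accepts ⊓ (G.sigNFA I₂ M).accepts :=
      ⟨(G.mem_sigNFA_accepts_iff I₁ M).2 ⟨w₁, hw₁, rfl⟩,
        (G.mem_sigNFA_accepts_iff I₂ M).2 ⟨w₂, hw₂, hsig.symm⟩⟩
    rw [h] at hx
    exact hx

/-- `M` satisfies the discrimination constraint `[I¹, I²]^≁` iff the
languages of the corresponding signature automata are disjoint. -/
theorem satisfiesDiscrimination_iff_sig_languages_disjoint
    (V E S Ev Q₁ Q₂ : Type) (G : WorldGraph V E S Ev)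
    (I₁ : DFA E Q₁) (I₂ : DFA E Q₂) (M : Finset S) (hM : M ⊆ G.sensors) :
    G.SatisfiesDiscrimination I₁ I₂ M ↔
      (G.sigNFA I₁ M).accepts ⊓ (G.sigNFA I₂ M).accepts = ⊥ :=
  satisfiesDiscrimination_iff_sig_languages_disjoint_general V E S Ev Q₁ Q₂ G I₁ I₂ M
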